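/- arXiv:1312.4637 — 7 statements merged into one kernel-verified Lean document; each statement's English description precedes it below -/
import Mathlib

section
/- Suppose for real-valued functions b_c on Vals(x_c) and b_s on Vals(x_s), s in S, we have max_{x_c} b_c(x_c) + sum_{s in S} max_{x_s} b_s(x_s) = max_{x_c} [ b_c(x_c) + sum_{s in S} b_s(x_s) ]. Then for every s in S there exist a maximizer x̂_c of b_c and a maximizer x̄_s of b_s such that the restriction of x̂_c to s equals x̄_s (decoding consistency at a fixed point). -/
/-- Decoding consistency at a fixed point: if the dual decrease is zero, then for
every `s` there are maximizers of `b_c` and `b_s` agreeing on `s`. -/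
theorem decoding_consistency
    {A : Type*} [Fintype A] [Nonempty A]
    {S : Type*} [Fintype S]
    {B : S → Type*} [∀ s, Fintype (B s)] [∀ s, Nonempty (B s)]
    (π : ∀ s, A → B s) (hπ : ∀ s, Function.Surjective (π s))
    (bc : A → ℝ) (bs : ∀ s, B s → ℝ)
    (heq : Finset.univ.sup' Finset.univ_nonempty bc
        + ∑ s : S, Finset.univ.sup' Finset.univ_nonempty (bs s)
      = Finset.univ.sup' Finset.univ_nonempty
          (fun x => bc x + ∑ s : S, bs s (π s x))) :
    ∀ s : S, ∃ xhat : A, (∀ y : A, bc y ≤ bc xhat) ∧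
      ∃ xbar : B s, (∀ y : B s, bs s y ≤ bs s xbar) ∧ π s xhat = xbar := by
  obtain ⟨x, -, hx⟩ := Finset.exists_mem_eq_sup' (Finset.univ_nonempty (α := A))
    (fun x => bc x + ∑ s : S, bs s (π s x))
  rw [hx] at heq
  have hbc : bc x ≤ Finset.univ.sup' Finset.univ_nonempty bc :=
    Finset.le_sup' bc (Finset.mem_univ x)
  have hbs : ∀ s : S, bs s (π s x) ≤ Finset.univ.sup' Finset.univ_nonempty (bs s) :=
    fun s => Finset.le_sup' (bs s) (Finset.mem_univ (π s x))
  have hsum : ∑ s : S, bs s (π s x) ≤ ∑ s : S, Finset.univ.sup' Finset.univ_nonempty (bs s) :=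
    Finset.sum_le_sum fun s _ => hbs s
  have hbc' : bc x = Finset.univ.sup' Finset.univ_nonempty bc := by linarith
  have hsum' : ∑ s : S, Finset.univ.sup' Finset.univ_nonempty (bs s)
      = ∑ s : S, bs s (π s x) := by linarith
  have heach := (Finset.sum_eq_sum_iff_of_le (fun s _ => hbs s)).mp hsum'.symm
  intro s
  refine ⟨x, fun y => ?_, π s x, fun y => ?_, rfl⟩
  · rw [hbc']; exact Finset.le_sup' bc (Finset.mem_univ y)
  · rw [heach s (Finset.mem_univ s)]; exact Finset.le_sup' (bs s) (Finset.mem_univ y)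
end

section
/- Define λ*_{c→s}(x_s) = -θ̂_s(x_s) + γ_s(x_s) - λ_s^{-c}(x_s) + (1/|S(c)\{c}|) · max_{x_{c\s}} [ θ̂_c(x_c) + λ_c(x_c) + sum_{ŝ in S(c)\{c}} ( θ̂_ŝ(x_ŝ) - γ_ŝ(x_ŝ) + λ_ŝ^{-c}(x_ŝ) ) ]. Then λ* minimizes the block objective g_c(λ_{c,S(c)}) = max_{x_c} [ θ̂_c(x_c) - sum_{s in S(c)\{c}} λ_{c→s}(x_s) + λ_c(x_c) ] + sum_{s in S(c)\{c}} max_{x_s} [ θ̂_s(x_s) - γ_s(x_s) + λ_s^{-c}(x_s) + λ_{c→s}(x_s) ] over all choices of (λ_{c→s})_{s in S(c)\{c}}. -/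
/-- The closed-form GDD message update `λ*` minimizes the block dual objective
`g_c` over all choices of messages `(λ_{c→s})_{s ∈ S(c)\{c}}`. -/
theorem gdd_message_update_minimizes_block
    {A : Type*} [Fintype A] [Nonempty A]
    {S : Type*} [Fintype S] [Nonempty S]
    {B : S → Type*} [∀ s, Fintype (B s)] [∀ s, Nonempty (B s)] [∀ s, DecidableEq (B s)]
    (π : ∀ s, A → B s) (hπ : ∀ s, Function.Surjective (π s))
    (θc lamc : A → ℝ) (θs γs lamm : ∀ s, B s → ℝ)
    (Λstar : ∀ s, B s → ℝ)
    (hΛ : ∀ (s : S) (y : B s), Λstar s y =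
      -θs s y + γs s y - lamm s y
      + (1 / (Fintype.card S : ℝ)) *
        (Finset.univ.filter (fun x => π s x = y)).sup'
          (by obtain ⟨x, hx⟩ := hπ s y; exact ⟨x, by simp [hx]⟩)
          (fun x => θc x + lamc x
            + ∑ t : S, (θs t (π t x) - γs t (π t x) + lamm t (π t x)))) :
    ∀ Λ : ∀ s, B s → ℝ,
      (Finset.univ.sup' Finset.univ_nonempty
          (fun x => θc x - (∑ s : S, Λstar s (π s x)) + lamc x)
        + ∑ s : S, Finset.univ.sup' Finset.univ_nonempty
            (fun y => θs s y - γs s y + lamm s y + Λstar s y))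
      ≤ (Finset.univ.sup' Finset.univ_nonempty
          (fun x => θc x - (∑ s : S, Λ s (π s x)) + lamc x)
        + ∑ s : S, Finset.univ.sup' Finset.univ_nonempty
            (fun y => θs s y - γs s y + lamm s y + Λ s y)) := by
  intro Λ
  classical
  set F : A → ℝ := fun x => θc x + lamc x
    + ∑ t : S, (θs t (π t x) - γs t (π t x) + lamm t (π t x)) with hF
  set n : ℝ := (Fintype.card S : ℝ) with hn
  have hnpos : (0:ℝ) < n := by rw [hn]; exact_mod_cast (Fintype.card_pos : 0 < Fintype.card S)
  set M : ℝ := Finset.univ.sup' Finset.univ_nonempty F with hM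
  have hMle : ∀ x, F x ≤ M := fun x => Finset.le_sup' F (Finset.mem_univ x)
  -- the filtered sups
  have hne : ∀ (s : S) (y : B s),
      ((Finset.univ.filter (fun x => π s x = y)) : Finset A).Nonempty := by
    intro s y
    obtain ⟨x, hx⟩ := hπ s y
    exact ⟨x, by simp [hx]⟩
  set T : ∀ s : S, B s → ℝ := fun s y =>
    (Finset.univ.filter (fun x => π s x = y)).sup' (hne s y) F with hT
  have hΛ' : ∀ (s : S) (y : B s), Λstar s y =
      -θs s y + γs s y - lamm s y + (1 / n) * T s y := by
    intro s y; rw [hΛ s y]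
  have hTleM : ∀ (s : S) (y : B s), T s y ≤ M := by
    intro s y
    apply Finset.sup'_le
    intro x _
    exact hMle x
  have hTgeF : ∀ (s : S) (x : A), F x ≤ T s (π s x) := by
    intro s x
    exact Finset.le_sup' F (by simp)
  -- LHS bounds
  have hL1 : Finset.univ.sup' Finset.univ_nonempty
      (fun x => θc x - (∑ s : S, Λstar s (π s x)) + lamc x) ≤ 0 := by
    apply Finset.sup'_le
    intro x _
    have hsum : ∑ s : S, Λstar s (π s x)
        = (∑ s : S, (-θs s (π s x) + γs s (π s x) - lamm s (π s x)))
          + (1 / n) * ∑ s : S, T s (π s x) := by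
      rw [Finset.mul_sum, ← Finset.sum_add_distrib]
      exact Finset.sum_congr rfl fun s _ => hΛ' s (π s x)
    have hneg : ∑ s : S, (-θs s (π s x) + γs s (π s x) - lamm s (π s x))
        = -∑ t : S, (θs t (π t x) - γs t (π t x) + lamm t (π t x)) := by
      rw [← Finset.sum_neg_distrib]
      exact Finset.sum_congr rfl fun s _ => by ring
    have hTsum : n * F x ≤ ∑ s : S, T s (π s x) := by
      calc n * F x = ∑ _s : S, F x := by
            rw [Finset.sum_const, nsmul_eq_mul, hn, Finset.card_univ]
        _ ≤ ∑ s : S, T s (π s x) := Finset.sum_le_sum fun s _ => hTgeF s x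
    have h1 : F x ≤ (1 / n) * ∑ s : S, T s (π s x) := by
      have := mul_le_mul_of_nonneg_left hTsum (le_of_lt (one_div_pos.mpr hnpos))
      calc F x = (1 / n) * (n * F x) := by field_simp
        _ ≤ (1 / n) * ∑ s : S, T s (π s x) := this
    rw [hsum, hneg]
    have hFx : F x = θc x + lamc x
        + ∑ t : S, (θs t (π t x) - γs t (π t x) + lamm t (π t x)) := rfl
    linarith
  have hL2 : ∀ s : S, Finset.univ.sup' Finset.univ_nonempty
      (fun y => θs s y - γs s y + lamm s y + Λstar s y) ≤ (1 / n) * M := by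
    intro s
    apply Finset.sup'_le
    intro y _
    rw [hΛ' s y]
    have : θs s y - γs s y + lamm s y
        + (-θs s y + γs s y - lamm s y + 1 / n * T s y) = (1 / n) * T s y := by ring
    rw [this]
    exact mul_le_mul_of_nonneg_left (hTleM s y) (le_of_lt (one_div_pos.mpr hnpos))
  have hLHS : (Finset.univ.sup' Finset.univ_nonempty
          (fun x => θc x - (∑ s : S, Λstar s (π s x)) + lamc x)
        + ∑ s : S, Finset.univ.sup' Finset.univ_nonempty
            (fun y => θs s y - γs s y + lamm s y + Λstar s y)) ≤ M := by
    have hsum2 : ∑ s : S, Finset.univ.sup' Finset.univ_nonempty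
        (fun y => θs s y - γs s y + lamm s y + Λstar s y)
        ≤ ∑ _s : S, (1 / n) * M := Finset.sum_le_sum fun s _ => hL2 s
    have : (∑ _s : S, (1 / n) * M) = M := by
      rw [Finset.sum_const, nsmul_eq_mul, Finset.card_univ, ← hn]
      field_simp
    linarith
  -- RHS bound
  obtain ⟨x₀, -, hx₀⟩ := Finset.exists_mem_eq_sup' (Finset.univ_nonempty (α := A)) F
  have hR1 : θc x₀ - (∑ s : S, Λ s (π s x₀)) + lamc x₀ ≤
      Finset.univ.sup' Finset.univ_nonempty
        (fun x => θc x - (∑ s : S, Λ s (π s x)) + lamc x) :=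
    Finset.le_sup' (fun x => θc x - (∑ s : S, Λ s (π s x)) + lamc x) (Finset.mem_univ x₀)
  have hR2 : ∑ s : S, (θs s (π s x₀) - γs s (π s x₀) + lamm s (π s x₀) + Λ s (π s x₀))
      ≤ ∑ s : S, Finset.univ.sup' Finset.univ_nonempty
          (fun y => θs s y - γs s y + lamm s y + Λ s y) :=
    Finset.sum_le_sum fun s _ =>
      Finset.le_sup' (fun y => θs s y - γs s y + lamm s y + Λ s y) (Finset.mem_univ (π s x₀))
  have hMeq : M = (θc x₀ - (∑ s : S, Λ s (π s x₀)) + lamc x₀)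
      + ∑ s : S, (θs s (π s x₀) - γs s (π s x₀) + lamm s (π s x₀) + Λ s (π s x₀)) := by
    rw [hM, hx₀]
    have : ∑ s : S, (θs s (π s x₀) - γs s (π s x₀) + lamm s (π s x₀) + Λ s (π s x₀))
        = (∑ s : S, (θs s (π s x₀) - γs s (π s x₀) + lamm s (π s x₀)))
          + ∑ s : S, Λ s (π s x₀) := by
      rw [← Finset.sum_add_distrib]
    rw [this]
    show θc x₀ + lamc x₀ + _ = _
    ring
  linarith
end

section
/- Given beliefs b_c on Vals(x_c) and b_s on Vals(x_s) for s in S, define b*_s(x_s) = (1/|S|) · max_{x_{c\s}} [ b_c(x_c) + sum_{ŝ in S} b_ŝ(x_ŝ) ] and b*_c(x_c) = b_c(x_c) + sum_{ŝ in S} b_ŝ(x_ŝ) - sum_{ŝ in S} b*_ŝ(x_ŝ). Then max_{x_c} b*_c(x_c) + sum_{s in S} max_{x_s} b*_s(x_s) = max_{x_c} [ b_c(x_c) + sum_{s in S} b_s(x_s) ], i.e., the belief update attains the minimal block dual value, equal to the max of the summed beliefs. -/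
/-- The belief update attains the minimal block dual value, equal to the max of
the summed beliefs. -/
theorem belief_update_attains_block_min
    {A : Type*} [Fintype A] [Nonempty A]
    {S : Type*} [Fintype S] [Nonempty S]
    {B : S → Type*} [∀ s, Fintype (B s)] [∀ s, Nonempty (B s)] [∀ s, DecidableEq (B s)]
    (π : ∀ s, A → B s) (hπ : ∀ s, Function.Surjective (π s))
    (bc : A → ℝ) (bs : ∀ s, B s → ℝ)
    (bstars : ∀ s, B s → ℝ) (bstarc : A → ℝ)
    (hbs : ∀ (s : S) (y : B s), bstars s y =
      (1 / (Fintype.card S : ℝ)) *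
        (Finset.univ.filter (fun x => π s x = y)).sup'
          (by obtain ⟨x, hx⟩ := hπ s y; exact ⟨x, by simp [hx]⟩)
          (fun x => bc x + ∑ t : S, bs t (π t x)))
    (hbc : ∀ x : A, bstarc x =
      bc x + (∑ t : S, bs t (π t x)) - ∑ t : S, bstars t (π t x)) :
    Finset.univ.sup' Finset.univ_nonempty bstarc
      + ∑ s : S, Finset.univ.sup' Finset.univ_nonempty (bstars s)
    = Finset.univ.sup' Finset.univ_nonempty
        (fun x => bc x + ∑ s : S, bs s (π s x)) := by
  set F : A → ℝ := fun x => bc x + ∑ s : S, bs s (π s x) with hF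
  set M : ℝ := Finset.univ.sup' Finset.univ_nonempty F with hM
  have cardpos : (0 : ℝ) < (Fintype.card S : ℝ) := by
    exact_mod_cast Fintype.card_pos
  have hcinv : (0 : ℝ) ≤ 1 / (Fintype.card S : ℝ) := by positivity
  -- upper bound on bstars
  have key1 : ∀ (s : S) (y : B s), bstars s y ≤ (1 / (Fintype.card S : ℝ)) * M := by
    intro s y
    rw [hbs]
    apply mul_le_mul_of_nonneg_left _ hcinv
    apply Finset.sup'_le
    intro x hx
    exact Finset.le_sup' F (Finset.mem_univ x)
  -- lower bound on bstars at π s x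
  have key2 : ∀ (s : S) (x : A), (1 / (Fintype.card S : ℝ)) * F x ≤ bstars s (π s x) := by
    intro s x
    rw [hbs]
    apply mul_le_mul_of_nonneg_left _ hcinv
    exact Finset.le_sup' _ (by simp)
  -- a maximizer of F
  obtain ⟨x0, -, hx0⟩ := Finset.exists_mem_eq_sup' (Finset.univ_nonempty (α := A)) F
  have hx0M : F x0 = M := hx0.symm
  have sup_star : ∀ s : S,
      Finset.univ.sup' Finset.univ_nonempty (bstars s) = (1 / (Fintype.card S : ℝ)) * M := by
    intro s
    apply le_antisymm
    · exact Finset.sup'_le _ _ fun y _ => key1 s y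
    · calc (1 / (Fintype.card S : ℝ)) * M = (1 / (Fintype.card S : ℝ)) * F x0 := by rw [hx0M]
        _ ≤ bstars s (π s x0) := key2 s x0
        _ ≤ _ := Finset.le_sup' _ (Finset.mem_univ _)
  have sum_star : ∑ s : S, Finset.univ.sup' Finset.univ_nonempty (bstars s) = M := by
    simp only [sup_star, Finset.sum_const, Finset.card_univ, nsmul_eq_mul]
    field_simp
  have sum_le : ∀ x : A, F x ≤ ∑ t : S, bstars t (π t x) := by
    intro x
    calc F x = ∑ t : S, (1 / (Fintype.card S : ℝ)) * F x := by
          rw [Finset.sum_const, Finset.card_univ, nsmul_eq_mul]; field_simp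
      _ ≤ ∑ t : S, bstars t (π t x) := Finset.sum_le_sum fun t _ => key2 t x
  have sup_c : Finset.univ.sup' Finset.univ_nonempty bstarc = 0 := by
    apply le_antisymm
    · apply Finset.sup'_le
      intro x _
      rw [hbc]
      have := sum_le x
      simp only [hF] at this ⊢
      linarith
    · have h1 : ∑ t : S, bstars t (π t x0) ≤ M := by
        calc ∑ t : S, bstars t (π t x0) ≤ ∑ t : S, (1 / (Fintype.card S : ℝ)) * M :=
              Finset.sum_le_sum fun t _ => key1 t (π t x0)
          _ = M := by rw [Finset.sum_const, Finset.card_univ, nsmul_eq_mul]; field_simp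
      have h2 : (0 : ℝ) ≤ bstarc x0 := by
        rw [hbc]
        have : bc x0 + ∑ t : S, bs t (π t x0) = M := hx0M
        linarith
      exact le_trans h2 (Finset.le_sup' _ (Finset.mem_univ x0))
  rw [sup_c, sum_star, zero_add]
end

section
/- After the belief update b*_s(x_s) = (1/|S|)·max_{x_{c\s}}[b_c(x_c) + sum_{ŝ in S} b_ŝ(x_ŝ)] for all s in S, the dual decrease for a subsequent update on the same block is zero: max_{x_c} b*_c(x_c) + sum_{s in S} max_{x_s} b*_s(x_s) - max_{x_c}[b*_c(x_c) + sum_{s in S} b*_s(x_s)] = 0. -/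
/-- After the belief update, the dual decrease for a subsequent update on the
same block is zero. -/
theorem belief_update_zero_dual_decrease
    {A : Type*} [Fintype A] [Nonempty A]
    {S : Type*} [Fintype S] [Nonempty S]
    {B : S → Type*} [∀ s, Fintype (B s)] [∀ s, Nonempty (B s)] [∀ s, DecidableEq (B s)]
    (π : ∀ s, A → B s) (hπ : ∀ s, Function.Surjective (π s))
    (bc : A → ℝ) (bs : ∀ s, B s → ℝ)
    (bstars : ∀ s, B s → ℝ) (bstarc : A → ℝ)
    (hbs : ∀ (s : S) (y : B s), bstars s y =
      (1 / (Fintype.card S : ℝ)) *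
        (Finset.univ.filter (fun x => π s x = y)).sup'
          (by obtain ⟨x, hx⟩ := hπ s y; exact ⟨x, by simp [hx]⟩)
          (fun x => bc x + ∑ t : S, bs t (π t x)))
    (hbc : ∀ x : A, bstarc x =
      bc x + (∑ t : S, bs t (π t x)) - ∑ t : S, bstars t (π t x)) :
    Finset.univ.sup' Finset.univ_nonempty bstarc
      + ∑ s : S, Finset.univ.sup' Finset.univ_nonempty (bstars s)
      - Finset.univ.sup' Finset.univ_nonempty
          (fun x => bstarc x + ∑ s : S, bstars s (π s x)) = 0 := by
  have hn : (0:ℝ) < (Fintype.card S : ℝ) := by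
    exact_mod_cast Fintype.card_pos
  set n : ℝ := (Fintype.card S : ℝ) with hn'
  set F : A → ℝ := fun x => bc x + ∑ t : S, bs t (π t x) with hFdef
  have hne : (Finset.univ : Finset A).Nonempty := Finset.univ_nonempty
  set M := Finset.univ.sup' hne F with hMdef
  obtain ⟨x₀, -, hx₀⟩ := Finset.exists_mem_eq_sup' hne F
  have hfib : ∀ (s : S) (x : A),
      x ∈ Finset.univ.filter (fun z => π s z = π s x) := by
    intro s x; simp
  have hle : ∀ (s : S) (y : B s), bstars s y ≤ (1/n) * M := by
    intro s y
    rw [hbs]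
    refine mul_le_mul_of_nonneg_left ?_ (by positivity)
    exact Finset.sup'_le _ _ fun x _ => Finset.le_sup' F (Finset.mem_univ x)
  have hge : ∀ (s : S) (x : A), (1/n) * F x ≤ bstars s (π s x) := by
    intro s x
    rw [hbs]
    refine mul_le_mul_of_nonneg_left ?_ (by positivity)
    exact Finset.le_sup' _ (hfib s x)
  have heq0 : ∀ s : S, bstars s (π s x₀) = (1/n) * M := by
    intro s
    refine le_antisymm (hle s _) ?_
    calc (1/n) * M = (1/n) * F x₀ := by rw [hMdef, hx₀]
      _ ≤ _ := hge s x₀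
  have hsumconst : ∀ c : ℝ, ∑ _t : S, (1/n) * c = c := by
    intro c
    rw [Finset.sum_const, Finset.card_univ, nsmul_eq_mul, ← hn']
    field_simp
  have hcle : ∀ x, bstarc x ≤ 0 := by
    intro x
    rw [hbc]
    have h1 : ∑ t : S, (1/n) * F x ≤ ∑ t : S, bstars t (π t x) :=
      Finset.sum_le_sum fun t _ => hge t x
    have h2 : ∑ t : S, (1/n) * F x = F x := hsumconst (F x)
    have h3 : F x = bc x + ∑ t : S, bs t (π t x) := rfl
    linarith
  have hc0 : bstarc x₀ = 0 := by
    rw [hbc]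
    have h1 : ∑ t : S, bstars t (π t x₀) = M := by
      rw [Finset.sum_congr rfl fun t _ => heq0 t]
      exact hsumconst M
    have h3 : F x₀ = bc x₀ + ∑ t : S, bs t (π t x₀) := rfl
    have h4 : M = F x₀ := by rw [hMdef, hx₀]
    linarith
  have hsupc : Finset.univ.sup' Finset.univ_nonempty bstarc = 0 := by
    refine le_antisymm (Finset.sup'_le _ _ fun x _ => hcle x) ?_
    rw [← hc0]
    exact Finset.le_sup' bstarc (Finset.mem_univ x₀)
  have hsups : ∀ s : S,
      Finset.univ.sup' Finset.univ_nonempty (bstars s) = (1/n) * M := by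
    intro s
    refine le_antisymm (Finset.sup'_le _ _ fun y _ => hle s y) ?_
    rw [← heq0 s]
    exact Finset.le_sup' (bstars s) (Finset.mem_univ (π s x₀))
  have hsupF : Finset.univ.sup' Finset.univ_nonempty
      (fun x => bstarc x + ∑ s : S, bstars s (π s x)) = M := by
    rw [hMdef]
    refine Finset.sup'_congr hne rfl fun x _ => ?_
    rw [hbc]; ring
  rw [hsupc, hsupF, Finset.sum_congr rfl fun s _ => hsups s, hsumconst M]
  ring
end

section
/- Let G^M = (V^M, E^M) be a marginal polytope diagram, and let c, s, t in V^M with t ⊂ s ⊂ c. If the edge (c → s) is in E^M, then the constraint sum_{x_{c\t}} μ_c(x_c) = μ_t(x_t) and the constraint sum_{x_{s\t}} μ_s(x_s) = μ_t(x_t) define the same feasible set when added to the set U of all marginalisation constraints from edges of E^M not pointing into t; i.e., (c → t) and (s → t) are equivalent edges. -/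
open Finset

/-- Restriction of a sub-assignment on `c` to a subset `s` (arbitrary values
outside `c`, only meaningful when `s ⊆ c`). -/
noncomputable def restr {V : Type*} [DecidableEq V] {X : V → Type*}
    [∀ i, Nonempty (X i)] (c s : Finset V) (x : (i : c) → X i.1) :
    (i : s) → X i.1 :=
  fun i => if h : i.1 ∈ c then x ⟨i.1, h⟩ else Classical.arbitrary _

/-- The marginalisation constraint `∑_{x_{c\s}} μ_c(x_c) = μ_s(x_s)`. -/
noncomputable def marg {V : Type*} [DecidableEq V] {X : V → Type*}
    [∀ i, Fintype (X i)] [∀ i, Nonempty (X i)] [∀ i, DecidableEq (X i)]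
    (c s : Finset V) (μc : ((i : c) → X i.1) → ℝ)
    (μs : ((i : s) → X i.1) → ℝ) : Prop :=
  ∀ y : (i : s) → X i.1,
    ∑ x ∈ Finset.univ.filter (fun x => restr c s x = y), μc x = μs y

lemma restr_comp {V : Type*} [DecidableEq V] {X : V → Type*}
    [∀ i, Nonempty (X i)] {c s t : Finset V} (hts : t ⊆ s) (hsc : s ⊆ c)
    (x : (i : c) → X i.1) : restr s t (restr c s x) = restr c t x := by
  funext i
  have h1 : i.1 ∈ s := hts i.2
  have h2 : i.1 ∈ c := hsc h1
  simp [restr, h1, h2]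

lemma marg_sum_eq {V : Type*} [DecidableEq V] {X : V → Type*}
    [∀ i, Fintype (X i)] [∀ i, Nonempty (X i)] [∀ i, DecidableEq (X i)]
    {c s t : Finset V} (hts : t ⊆ s) (hsc : s ⊆ c)
    {μc : ((i : c) → X i.1) → ℝ} {μs : ((i : s) → X i.1) → ℝ}
    (h : marg c s μc μs) (y : (i : t) → X i.1) :
    ∑ x ∈ Finset.univ.filter (fun x => restr c t x = y), μc x
      = ∑ z ∈ Finset.univ.filter (fun z => restr s t z = y), μs z := by
  rw [← Finset.sum_fiberwise_of_maps_to (g := restr c s)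
      (t := Finset.univ.filter (fun z => restr s t z = y))
      (by intro x hx
          simp only [Finset.mem_filter, Finset.mem_univ, true_and] at hx ⊢
          rw [restr_comp hts hsc, hx])]
  refine Finset.sum_congr rfl fun z hz => ?_
  simp only [Finset.mem_filter, Finset.mem_univ, true_and] at hz
  rw [← h z]
  refine Finset.sum_congr ?_ fun _ _ => rfl
  rw [Finset.filter_filter]
  refine Finset.filter_congr fun x _ => ?_
  constructor
  · rintro ⟨_, h2⟩; exact h2
  · intro h2; exact ⟨by rw [← restr_comp hts hsc, h2, hz], h2⟩

/-- Edge equivalence type 1: if `t ⊂ s ⊂ c` and `(c → s) ∈ E`, then the edges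
`(c → t)` and `(s → t)` are equivalent: adding either constraint to the
constraints `U` from all edges not pointing into `t` gives the same feasible set. -/
theorem edge_equivalence_type_one {V : Type*} [DecidableEq V] {X : V → Type*}
    [∀ i, Fintype (X i)] [∀ i, Nonempty (X i)] [∀ i, DecidableEq (X i)]
    (VM : Set (Finset V)) (E : Set (Finset V × Finset V))
    (hE : ∀ e ∈ E, e.2 ⊆ e.1 ∧ e.1 ∈ VM ∧ e.2 ∈ VM)
    (c s t : Finset V) (hc : c ∈ VM) (hs : s ∈ VM) (ht : t ∈ VM)
    (hts : t ⊂ s) (hsc : s ⊂ c) (hcsE : (c, s) ∈ E) :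
    {μ : ∀ a : Finset V, ((i : a) → X i.1) → ℝ |
        (∀ e ∈ E, e.2 ≠ t → marg e.1 e.2 (μ e.1) (μ e.2))
        ∧ marg c t (μ c) (μ t)}
    = {μ : ∀ a : Finset V, ((i : a) → X i.1) → ℝ |
        (∀ e ∈ E, e.2 ≠ t → marg e.1 e.2 (μ e.1) (μ e.2))
        ∧ marg s t (μ s) (μ t)} := by
  have hst : s ≠ t := (hts.ne).symm
  ext μ
  simp only [Set.mem_setOf_eq]
  constructor
  · rintro ⟨hU, hct⟩
    refine ⟨hU, fun y => ?_⟩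
    have hcs : marg c s (μ c) (μ s) := hU (c, s) hcsE hst
    rw [← marg_sum_eq hts.subset hsc.subset hcs y]
    exact hct y
  · rintro ⟨hU, hstm⟩
    refine ⟨hU, fun y => ?_⟩
    have hcs : marg c s (μ c) (μ s) := hU (c, s) hcsE hst
    rw [marg_sum_eq hts.subset hsc.subset hcs y]
    exact hstm y
end

section
/- Let G^M = (V^M, E^M) be a marginal polytope diagram, and c, s1, s2, t in V^M with t ⊂ s1, t ⊂ s2, and both edges (c → s1), (c → s2) in E^M. Then the edges (s1 → t) and (s2 → t) are equivalent with respect to G^M. -/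
open Finset

lemma sum_fiber {V : Type*} [DecidableEq V] {X : V → Type*}
    [∀ i, Fintype (X i)] [∀ i, Nonempty (X i)] [∀ i, DecidableEq (X i)]
    {c s t : Finset V} (hts : t ⊆ s) (hsc : s ⊆ c)
    (μc : ((i : c) → X i.1) → ℝ) (y : (i : t) → X i.1) :
    ∑ z ∈ Finset.univ.filter (fun z => restr s t z = y),
      ∑ x ∈ Finset.univ.filter (fun x => restr c s x = z), μc x
      = ∑ x ∈ Finset.univ.filter (fun x => restr c t x = y), μc x := by
  rw [Finset.sum_fiberwise_eq_sum_filter]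
  apply Finset.sum_congr
  · ext x
    simp [restr_comp hts hsc]
  · intros; rfl

lemma marg_trans {V : Type*} [DecidableEq V] {X : V → Type*}
    [∀ i, Fintype (X i)] [∀ i, Nonempty (X i)] [∀ i, DecidableEq (X i)]
    {c s t : Finset V} (hts : t ⊆ s) (hsc : s ⊆ c)
    {μc : ((i : c) → X i.1) → ℝ} {μs : ((i : s) → X i.1) → ℝ}
    {μt : ((i : t) → X i.1) → ℝ}
    (h1 : marg c s μc μs) (h2 : marg s t μs μt) : marg c t μc μt := by
  intro y
  rw [← sum_fiber hts hsc, ← h2 y]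
  exact Finset.sum_congr rfl fun z _ => h1 z

lemma marg_cancel {V : Type*} [DecidableEq V] {X : V → Type*}
    [∀ i, Fintype (X i)] [∀ i, Nonempty (X i)] [∀ i, DecidableEq (X i)]
    {c s t : Finset V} (hts : t ⊆ s) (hsc : s ⊆ c)
    {μc : ((i : c) → X i.1) → ℝ} {μs : ((i : s) → X i.1) → ℝ}
    {μt : ((i : t) → X i.1) → ℝ}
    (h1 : marg c s μc μs) (h2 : marg c t μc μt) : marg s t μs μt := by
  intro y
  rw [← h2 y, ← sum_fiber hts hsc]
  exact Finset.sum_congr rfl fun z _ => (h1 z).symm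

/-- Edge equivalence type 2: if `(c → s₁), (c → s₂) ∈ E` and `t ⊂ s₁`, `t ⊂ s₂`,
then the edges `(s₁ → t)` and `(s₂ → t)` are equivalent with respect to the diagram. -/
theorem edge_equivalence_type_two {V : Type*} [DecidableEq V] {X : V → Type*}
    [∀ i, Fintype (X i)] [∀ i, Nonempty (X i)] [∀ i, DecidableEq (X i)]
    (VM : Set (Finset V)) (E : Set (Finset V × Finset V))
    (hE : ∀ e ∈ E, e.2 ⊆ e.1 ∧ e.1 ∈ VM ∧ e.2 ∈ VM)
    (c s1 s2 t : Finset V) (hc : c ∈ VM) (hs1 : s1 ∈ VM) (hs2 : s2 ∈ VM)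
    (ht : t ∈ VM) (hts1 : t ⊂ s1) (hts2 : t ⊂ s2)
    (hcs1 : (c, s1) ∈ E) (hcs2 : (c, s2) ∈ E) :
    {μ : ∀ a : Finset V, ((i : a) → X i.1) → ℝ |
        (∀ e ∈ E, e.2 ≠ t → marg e.1 e.2 (μ e.1) (μ e.2))
        ∧ marg s1 t (μ s1) (μ t)}
    = {μ : ∀ a : Finset V, ((i : a) → X i.1) → ℝ |
        (∀ e ∈ E, e.2 ≠ t → marg e.1 e.2 (μ e.1) (μ e.2))
        ∧ marg s2 t (μ s2) (μ t)} := by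
  ext μ
  have hs1c := (hE _ hcs1).1
  have hs2c := (hE _ hcs2).1
  constructor
  · rintro ⟨hU, h1⟩
    refine ⟨hU, ?_⟩
    have m1 : marg c s1 (μ c) (μ s1) := hU _ hcs1 (fun h => hts1.2 (h ▸ le_refl _))
    have m2 : marg c s2 (μ c) (μ s2) := hU _ hcs2 (fun h => hts2.2 (h ▸ le_refl _))
    exact marg_cancel hts2.1 hs2c m2 (marg_trans hts1.1 hs1c m1 h1)
  · rintro ⟨hU, h2⟩
    refine ⟨hU, ?_⟩
    have m1 : marg c s1 (μ c) (μ s1) := hU _ hcs1 (fun h => hts1.2 (h ▸ le_refl _))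
    have m2 : marg c s2 (μ c) (μ s2) := hU _ hcs2 (fun h => hts2.2 (h ▸ le_refl _))
    exact marg_cancel hts1.1 hs1c m1 (marg_trans hts2.1 hs2c m2 h2)
end

section
/- For any c in C' with nonempty S(c)\{c}, the messages λ*_{c→s} given by the GDD update make all block beliefs 'agree at the top': after the update, for every s in S(c)\{c}, max_{x_s} b*_s(x_s) = (1/|S(c)\{c}|) · M and max_{x_c} b*_c(x_c) + sum_s max_{x_s} b*_s(x_s) = M, where M = max_{x_c} [ b_c(x_c) + sum_{s in S(c)\{c}} b_s(x_s) ] is computed from the pre-update beliefs. -/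
/-- After the GDD block update, the block beliefs agree at the top:
each `max b*_s` equals `M / |S|` and `max b*_c + ∑_s max b*_s = M`, where
`M = max_{x_c} [b_c + ∑_s b_s]` is computed from the pre-update beliefs. -/
theorem gdd_update_beliefs_agree_at_top
    {A : Type*} [Fintype A] [Nonempty A]
    {S : Type*} [Fintype S] [Nonempty S]
    {B : S → Type*} [∀ s, Fintype (B s)] [∀ s, Nonempty (B s)] [∀ s, DecidableEq (B s)]
    (π : ∀ s, A → B s) (hπ : ∀ s, Function.Surjective (π s))
    (bc : A → ℝ) (bs : ∀ s, B s → ℝ)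
    (bstars : ∀ s, B s → ℝ) (bstarc : A → ℝ)
    (hbs : ∀ (s : S) (y : B s), bstars s y =
      (1 / (Fintype.card S : ℝ)) *
        (Finset.univ.filter (fun x => π s x = y)).sup'
          (by obtain ⟨x, hx⟩ := hπ s y; exact ⟨x, by simp [hx]⟩)
          (fun x => bc x + ∑ t : S, bs t (π t x)))
    (hbc : ∀ x : A, bstarc x =
      bc x + (∑ t : S, bs t (π t x)) - ∑ t : S, bstars t (π t x))
    (M : ℝ)
    (hM : M = Finset.univ.sup' Finset.univ_nonempty
        (fun x => bc x + ∑ s : S, bs s (π s x))) :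
    (∀ s : S, Finset.univ.sup' Finset.univ_nonempty (bstars s)
        = M / (Fintype.card S : ℝ))
    ∧ Finset.univ.sup' Finset.univ_nonempty bstarc
        + ∑ s : S, Finset.univ.sup' Finset.univ_nonempty (bstars s) = M := by
  set f : A → ℝ := fun x => bc x + ∑ s : S, bs s (π s x) with hf
  set n : ℝ := (Fintype.card S : ℝ) with hn
  have hnpos : (0 : ℝ) < n := by
    rw [hn]; exact_mod_cast (Fintype.card_pos : 0 < Fintype.card S)
  have hconst : ∀ c : ℝ, (∑ _t : S, c) = n * c := by
    intro c; rw [Finset.sum_const, nsmul_eq_mul, hn, Finset.card_univ]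
  -- fiber nonempty
  have hfib : ∀ (s : S) (y : B s),
      (Finset.univ.filter (fun x => π s x = y)).Nonempty := by
    intro s y
    obtain ⟨x, hx⟩ := hπ s y
    exact ⟨x, by simp [hx]⟩
  set g : ∀ s : S, B s → ℝ := fun s y =>
    (Finset.univ.filter (fun x => π s x = y)).sup' (hfib s y) f with hg
  -- each fiber sup ≤ M
  have hgle : ∀ (s : S) (y : B s), g s y ≤ M := by
    intro s y
    apply Finset.sup'_le
    intro x _
    rw [hM]
    exact Finset.le_sup' f (Finset.mem_univ x)
  -- f x ≤ g s (π s x)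
  have hfleg : ∀ (s : S) (x : A), f x ≤ g s (π s x) := by
    intro s x
    exact Finset.le_sup' f (by simp)
  -- maximizer of f
  obtain ⟨x₀, -, hx₀⟩ := Finset.exists_mem_eq_sup' (Finset.univ_nonempty (α := A)) f
  have hx₀M : f x₀ = M := by rw [hM, hx₀]
  have hgx₀ : ∀ s : S, g s (π s x₀) = M :=
    fun s => le_antisymm (hgle s _) (hx₀M ▸ hfleg s x₀)
  -- bstars in terms of g
  have hbs' : ∀ (s : S) (y : B s), bstars s y = (1 / n) * g s y := fun s y => hbs s y
  -- part 1
  have part1 : ∀ s : S, Finset.univ.sup' Finset.univ_nonempty (bstars s) = M / n := by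
    intro s
    apply le_antisymm
    · apply Finset.sup'_le
      intro y _
      rw [hbs' s y, one_div, div_eq_inv_mul]
      exact mul_le_mul_of_nonneg_left (hgle s y) (by positivity)
    · have : bstars s (π s x₀) = M / n := by
        rw [hbs' s _, hgx₀ s]; ring
      calc M / n = bstars s (π s x₀) := this.symm
        _ ≤ _ := Finset.le_sup' (bstars s) (Finset.mem_univ _)
  refine ⟨part1, ?_⟩
  have hsum : (∑ s : S, Finset.univ.sup' Finset.univ_nonempty (bstars s)) = M := by
    rw [Finset.sum_congr rfl (fun s _ => part1 s), hconst]
    field_simp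
  rw [hsum]
  -- suffices sup bstarc = 0
  have hbsupc : Finset.univ.sup' Finset.univ_nonempty bstarc = 0 := by
    apply le_antisymm
    · apply Finset.sup'_le
      intro x _
      rw [hbc x]
      have h1 : f x ≤ ∑ t : S, bstars t (π t x) := by
        have : ∀ t : S, (1 / n) * f x ≤ bstars t (π t x) := by
          intro t
          rw [hbs' t _]
          exact mul_le_mul_of_nonneg_left (hfleg t x) (by positivity)
        calc f x = ∑ _t : S, (1 / n) * f x := by
              rw [hconst]; field_simp
          _ ≤ _ := Finset.sum_le_sum (fun t _ => this t)
      have := h1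
      simp only [hf] at this
      linarith
    · have : bstarc x₀ = 0 := by
        rw [hbc x₀]
        have : ∀ t : S, bstars t (π t x₀) = M / n := by
          intro t; rw [hbs' t _, hgx₀ t]; ring
        rw [Finset.sum_congr rfl (fun t _ => this t)]
        have hsum2 : (∑ _t : S, M / n) = M := by
          rw [hconst]; field_simp
        rw [hsum2]
        have : bc x₀ + ∑ t : S, bs t (π t x₀) = M := hx₀M
        linarith
      calc (0:ℝ) = bstarc x₀ := this.symm
        _ ≤ _ := Finset.le_sup' bstarc (Finset.mem_univ _)
  rw [hbsupc, zero_add]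
end
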